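/- arXiv:2304.13248 — 2 statements merged into one kernel-verified Lean document; each statement's English description precedes it below -/
import Mathlib

section
/- Let {p_n} satisfy the three-term recurrence p_{n+1} = (t − β_n)p_n − α_n p_{n−1} with α_n ≠ 0, and let d(n,m,k) be defined by p_n p_m = ∑_k d(n,m,k) p_k. Then d(n,m,k) = 0 whenever k < |n − m|, so that p_n(t) p_m(t) = ∑_{k=|n−m|}^{n+m} d(n,m,k) p_k(t). -/
open scoped BigOperators

/-- Product of infinite matrices; the sum is a `tsum`, which reduces to a finite
sum for the banded matrices considered here. -/
noncomputable def matMul (A B : ℕ → ℕ → ℂ) : ℕ → ℕ → ℂ :=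
  fun i k => ∑' j, A i j * B j k

noncomputable def matPow (A : ℕ → ℕ → ℂ) : ℕ → ℕ → ℕ → ℂ
  | 0 => fun i k => if i = k then 1 else 0
  | n + 1 => matMul (matPow A n) A

/-- Substitution of a matrix into a polynomial. -/
noncomputable def matPolyEval (w : Polynomial ℂ) (A : ℕ → ℕ → ℂ) : ℕ → ℕ → ℂ :=
  fun i k => ∑ m ∈ Finset.range (w.natDegree + 1), w.coeff m * matPow A m i k

/-- The shift matrix `X`, with `X_{j,j+1} = 1`. -/
def Xmat : ℕ → ℕ → ℂ := fun i k => if k = i + 1 then 1 else 0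

/-- The transpose `X̂` of the shift matrix. -/
def XhatMat : ℕ → ℕ → ℂ := fun i k => if i = k + 1 then 1 else 0

/-- The identity matrix. -/
def Imat : ℕ → ℕ → ℂ := fun i k => if i = k then 1 else 0

/-- The polynomial given by row `k` of a lower triangular matrix. -/
noncomputable def rowPoly (M : ℕ → ℕ → ℂ) (k : ℕ) : Polynomial ℂ :=
  ∑ j ∈ Finset.range (k + 1), Polynomial.C (M k j) * Polynomial.X ^ j

/-!
Multiplication by `X` maps `span {p k | k ≥ K}` into `span {p k | k ≥ K - 1}`, by the
three-term recurrence. Hence multiplying by a polynomial of degree `m` lowers the index of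
such a tail span by at most `m`, so `p n * p m` lies in the tail span from `n - m` and, by
commutativity, in the one from `m - n`. Since the `p k` are monic of degree `k`, they form a
basis of `R[X]`, and `d n m k` is the `k`-th coordinate of `p n * p m` in it.
-/

open Polynomial

variable {R : Type*} [CommRing R]

structure IsThreeTermRecurrence (β α : ℕ → R) (p : ℕ → R[X]) : Prop where
  zero : p 0 = 1
  one : p 1 = X - C (β 0)
  succ : ∀ n, 1 ≤ n → p (n + 1) = (X - C (β n)) * p n - C (α n) * p (n - 1)

noncomputable def tailSpan (p : ℕ → R[X]) (K : ℕ) : Submodule R R[X] :=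
  Submodule.span R (p '' Set.Ici K)

theorem tailSpan_antitone (p : ℕ → R[X]) : Antitone (tailSpan p) := fun _ _ hKL =>
  Submodule.span_mono (Set.image_mono (Set.Ici_subset_Ici.2 hKL))

theorem mem_tailSpan (p : ℕ → R[X]) {K k : ℕ} (hKk : K ≤ k) : p k ∈ tailSpan p K :=
  Submodule.subset_span ⟨k, hKk, rfl⟩

namespace IsThreeTermRecurrence

variable {β α : ℕ → R} {p : ℕ → R[X]} (h : IsThreeTermRecurrence β α p)
include h

theorem monic_and_natDegree_eq [Nontrivial R] (n : ℕ) : (p n).Monic ∧ (p n).natDegree = n := by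
  induction n using Nat.twoStepInduction with
  | zero => exact ⟨h.zero ▸ monic_one, h.zero ▸ natDegree_one⟩
  | one => exact ⟨h.one ▸ monic_X_sub_C _, h.one ▸ natDegree_X_sub_C _⟩
  | more k ih₀ ih₁ =>
    have hlead : ((X - C (β (k + 1))) * p (k + 1)).natDegree = k + 2 := by
      rw [(monic_X_sub_C _).natDegree_mul ih₁.1, natDegree_X_sub_C, ih₁.2]; omega
    have hlt : (C (α (k + 1)) * p k).natDegree < ((X - C (β (k + 1))) * p (k + 1)).natDegree :=
      hlead ▸ (natDegree_C_mul_le _ _).trans_lt (by rw [ih₀.2]; omega)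
    rw [h.succ (k + 1) (by omega), Nat.add_sub_cancel]
    exact ⟨((monic_X_sub_C _).mul ih₁.1).sub_of_left (degree_lt_degree hlt),
      (natDegree_sub_eq_left_of_natDegree_lt hlt).trans hlead⟩

theorem monic [Nontrivial R] (n : ℕ) : (p n).Monic := (h.monic_and_natDegree_eq n).1

theorem natDegree_eq [Nontrivial R] (n : ℕ) : (p n).natDegree = n :=
  (h.monic_and_natDegree_eq n).2

theorem X_mul_mem_tailSpan (k : ℕ) : X * p k ∈ tailSpan p (k - 1) := by
  rcases k with _ | k
  · have hX : X * p 0 = p 1 + β 0 • p 0 := by rw [smul_eq_C_mul, h.zero, h.one]; ring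
    rw [hX]
    exact add_mem (mem_tailSpan p (by omega)) (Submodule.smul_mem _ _ (mem_tailSpan p le_rfl))
  · have hX : X * p (k + 1) = p (k + 2) + β (k + 1) • p (k + 1) + α (k + 1) • p k := by
      rw [smul_eq_C_mul, smul_eq_C_mul, h.succ (k + 1) (by omega), Nat.add_sub_cancel]; ring
    rw [hX]
    exact add_mem (add_mem (mem_tailSpan p (by omega))
      (Submodule.smul_mem _ _ (mem_tailSpan p (by omega))))
      (Submodule.smul_mem _ _ (mem_tailSpan p (by omega)))

theorem X_mul_mem_tailSpan_of_mem {q : R[X]} {K : ℕ} (hq : q ∈ tailSpan p K) :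
    X * q ∈ tailSpan p (K - 1) := by
  suffices tailSpan p K ≤ (tailSpan p (K - 1)).comap (LinearMap.mulLeft R X) from
    Submodule.mem_comap.1 (this hq)
  refine Submodule.span_le.2 (Set.image_subset_iff.2 fun k (hk : K ≤ k) => ?_)
  exact tailSpan_antitone p (by omega) (h.X_mul_mem_tailSpan k)

theorem X_pow_mul_mem_tailSpan_of_mem {q : R[X]} {K : ℕ} (hq : q ∈ tailSpan p K) (j : ℕ) :
    X ^ j * q ∈ tailSpan p (K - j) := by
  induction j with
  | zero => simpa using hq
  | succ j ih =>
    rw [pow_succ', mul_assoc, ← Nat.sub_sub]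
    exact h.X_mul_mem_tailSpan_of_mem ih

theorem mul_mem_tailSpan_of_mem {q r : R[X]} {K m : ℕ} (hq : q ∈ tailSpan p K)
    (hr : r.natDegree ≤ m) : r * q ∈ tailSpan p (K - m) := by
  rw [r.as_sum_range_C_mul_X_pow, Finset.sum_mul]
  refine Submodule.sum_mem _ fun i hi => ?_
  rw [mul_assoc, ← smul_eq_C_mul]
  exact Submodule.smul_mem _ _ (tailSpan_antitone p (by simp at hi; omega)
    (h.X_pow_mul_mem_tailSpan_of_mem hq i))

theorem mul_mem_tailSpan_natAbs [Nontrivial R] (n m : ℕ) :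
    p n * p m ∈ tailSpan p ((n : ℤ) - m).natAbs := by
  rcases le_total m n with hmn | hnm
  · have := h.mul_mem_tailSpan_of_mem (mem_tailSpan p (le_refl n)) (h.natDegree_eq m).le
    rwa [mul_comm, show n - m = ((n : ℤ) - m).natAbs by omega] at this
  · have := h.mul_mem_tailSpan_of_mem (mem_tailSpan p (le_refl m)) (h.natDegree_eq n).le
    rwa [show m - n = ((n : ℤ) - m).natAbs by omega] at this

variable [IsDomain R]

noncomputable def toSequence : Polynomial.Sequence R where
  elems' := p
  degree_eq' n := by
    rw [degree_eq_natDegree (h.monic n).ne_zero, h.natDegree_eq n]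

noncomputable def basis : Module.Basis ℕ R R[X] :=
  h.toSequence.basis fun n => by
    simp [toSequence, (h.monic n).leadingCoeff]

theorem coe_basis : ⇑h.basis = p := funext (Polynomial.Sequence.basis_eq_self _ _)

theorem basis_repr_sum_C_mul (s : Finset ℕ) (c : ℕ → R) {k : ℕ} (hk : k ∈ s) :
    h.basis.repr (∑ j ∈ s, C (c j) * p j) k = c k := by
  have hsum : ∑ j ∈ s, C (c j) * p j = ∑ j ∈ s, c j • h.basis j := by
    simp [h.coe_basis, smul_eq_C_mul]
  simp [hsum, Finsupp.single_apply, hk]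

theorem basis_repr_eq_zero_of_mem_tailSpan {q : R[X]} {K k : ℕ} (hq : q ∈ tailSpan p K)
    (hk : k < K) : h.basis.repr q k = 0 := by
  rw [tailSpan, ← h.coe_basis, Module.Basis.mem_span_image] at hq
  by_contra hne
  exact not_le.2 hk (hq (Finsupp.mem_support_iff.2 hne))

end IsThreeTermRecurrence

theorem stmt10_general (β : ℕ → ℂ) (α : ℕ → ℂ) (p : ℕ → Polynomial ℂ)
    (hp0 : p 0 = 1) (hp1 : p 1 = Polynomial.X - Polynomial.C (β 0))
    (hrec : ∀ n : ℕ, 1 ≤ n →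
      p (n + 1) = (Polynomial.X - Polynomial.C (β n)) * p n - Polynomial.C (α n) * p (n - 1))
    (d : ℕ → ℕ → ℕ → ℂ)
    (hd : ∀ n m : ℕ, p n * p m =
        ∑ k ∈ Finset.range (n + m + 1), Polynomial.C (d n m k) * p k) :
    (∀ n m k : ℕ, (k : ℤ) < |(n : ℤ) - (m : ℤ)| → d n m k = 0) ∧
    (∀ n m : ℕ, p n * p m =
      ∑ k ∈ Finset.Icc ((n : ℤ) - (m : ℤ)).natAbs (n + m),
        Polynomial.C (d n m k) * p k) := by
  have h : IsThreeTermRecurrence β α p := ⟨hp0, hp1, hrec⟩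
  have hvanish (n m k : ℕ) (hk : k < ((n : ℤ) - m).natAbs) : d n m k = 0 := by
    rw [← h.basis_repr_sum_C_mul _ (d n m) (Finset.mem_range.2 (show k < n + m + 1 by omega)), ← hd]
    exact h.basis_repr_eq_zero_of_mem_tailSpan (h.mul_mem_tailSpan_natAbs n m) hk
  refine ⟨fun n m k hk => hvanish n m k (by rw [Int.abs_eq_natAbs] at hk; omega), fun n m => ?_⟩
  rw [hd n m]
  refine (Finset.sum_subset (fun k hk => ?_) fun k hk hk' => ?_).symm
  · simp only [Finset.mem_Icc, Finset.mem_range] at hk ⊢; omega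
  · simp only [Finset.mem_range, Finset.mem_Icc, not_and, not_le] at hk hk'
    rw [hvanish n m k (by omega), map_zero, zero_mul]

theorem stmt10 (β : ℕ → ℂ) (α : ℕ → ℂ) (p : ℕ → Polynomial ℂ)
    (hp0 : p 0 = 1) (hp1 : p 1 = Polynomial.X - Polynomial.C (β 0))
    (hrec : ∀ n : ℕ, 1 ≤ n →
      p (n + 1) = (Polynomial.X - Polynomial.C (β n)) * p n - Polynomial.C (α n) * p (n - 1))
    (hα : ∀ n : ℕ, 1 ≤ n → α n ≠ 0)
    (d : ℕ → ℕ → ℕ → ℂ)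
    (hd : ∀ n m : ℕ, p n * p m =
        ∑ k ∈ Finset.range (n + m + 1), Polynomial.C (d n m k) * p k)
    (hd0 : ∀ n m k : ℕ, n + m < k → d n m k = 0) :
    (∀ n m k : ℕ, (k : ℤ) < |(n : ℤ) - (m : ℤ)| → d n m k = 0) ∧
    (∀ n m : ℕ, p n * p m =
      ∑ k ∈ Finset.Icc ((n : ℤ) - (m : ℤ)).natAbs (n + m),
        Polynomial.C (d n m k) * p k) :=
  stmt10_general β α p hp0 hp1 hrec d hd
end

section
/- Let a ∈ ℂ with a ≠ 0, and define the monic Charlier polynomials by p_0 = 1, p_1 = t − a, p_{n+1}(t) = (t − (n + a)) p_n(t) − a n p_{n−1}(t) for n ≥ 1. Let H = X + XD + (a−1)I + aD, where X is the shift matrix and D the matrix with D_{k+1,k} = k+1. Then for all n ≥ 0: p_n(H) = ∑_{k=0}^{n} (n choose k) a^k D^k (I + D)^{n−k} X^{n−k}. -/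
/-! Put `Y = I + D`. From `X D = D X + I` we get `X Y = Y X + I`, and `H = Y X + a Y`. Commuting
`X` to the right through `D ^ k` and `Y ^ m` shows that `H` sends `T k m = D ^ k Y ^ m X ^ m` to
`T k (m + 1) + a T (k + 1) m + (k + m + a) T k m + k T (k - 1) m`. Weighted by `C(n, k) a ^ k` and
summed over `k + m = n`, Pascal's rule turns this into the Charlier recurrence for the right-hand
sides, so they equal `p_n(H)`. Only the relation `X D = D X + I` enters, so the computation takes
place in any algebra; here it is the algebra of infinite matrices with finitely many nonzero
diagonals above the main one, in which all products are finite sums. -/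

open scoped BigOperators

/-- The differentiation matrix `D`, with `D_{k+1,k} = k+1`. -/
def Dmat : ℕ → ℕ → ℂ := fun i k => if i = k + 1 then (i : ℂ) else 0


open Finset

section WeylRelation

variable {A : Type*} [Ring A]

theorem nsmul_mul_pow_pred (y : A) (n : ℕ) : n • (y * y ^ (n - 1)) = n • y ^ n := by
  cases n <;> simp [pow_succ']

theorem mul_pow_eq_of_mul_eq_add_one {x y : A} (h : x * y = y * x + 1) (n : ℕ) :
    x * y ^ n = y ^ n * x + n • y ^ (n - 1) := by
  induction n with
  | zero => simp
  | succ n ih =>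
    rw [pow_succ, ← mul_assoc, ih, add_mul, mul_assoc, h, mul_add, mul_one, ← mul_assoc,
      ← pow_succ, smul_mul_assoc, pow_mul_comm', nsmul_mul_pow_pred, add_assoc, ← succ_nsmul']
    simp

variable {R : Type*} [CommRing R] [Algebra R A]

def charlierTerm (a : R) (x d : A) (k m : ℕ) : A := a ^ k • (d ^ k * ((1 + d) ^ m * x ^ m))

def charlierSum (a : R) (x d : A) (n : ℕ) : A :=
  ∑ km ∈ antidiagonal n, n.choose km.1 • charlierTerm a x d km.1 km.2

variable {x d : A}

theorem mul_charlierTerm (hxd : x * d = d * x + 1) (a : R) (k m : ℕ) :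
    ((1 + d) * x + a • (1 + d)) * charlierTerm a x d k m =
      charlierTerm a x d k (m + 1) + charlierTerm a x d (k + 1) m
        + (((k + m : ℕ) : R) + a) • charlierTerm a x d k m
        + (a * k) • charlierTerm a x d (k - 1) m := by
  have hxy : x * (1 + d) = (1 + d) * x + 1 := by
    rw [mul_add, add_mul, hxd, mul_one, one_mul]; abel
  have hyd : Commute (1 + d) d := (Commute.one_left d).add_left (Commute.refl d)
  obtain ⟨W, hW⟩ : ∃ W, (1 + d) ^ m * x ^ m = W := ⟨_, rfl⟩
  have hxW : x * W = (1 + d) ^ m * x ^ (m + 1) + m • ((1 + d) ^ (m - 1) * x ^ m) := by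
    rw [← hW, ← mul_assoc, mul_pow_eq_of_mul_eq_add_one hxy, add_mul, mul_assoc, ← pow_succ',
      smul_mul_assoc]
  have hyW : (1 + d) * (m • ((1 + d) ^ (m - 1) * x ^ m)) = m • W := by
    rw [mul_smul_comm, ← mul_assoc, ← smul_mul_assoc, nsmul_mul_pow_pred, smul_mul_assoc, hW]
  have hy_mul (Z : A) : (1 + d) * Z = Z + d * Z := by rw [add_mul, one_mul]
  have hxdW : (1 + d) * (x * (d ^ k * W)) = d ^ k * ((1 + d) ^ (m + 1) * x ^ (m + 1))
      + m • (d ^ k * W) + k • (d ^ (k - 1) * W) + k • (d ^ k * W) :=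
    calc (1 + d) * (x * (d ^ k * W))
        = (1 + d) * (d ^ k * (x * W)) + k • ((1 + d) * (d ^ (k - 1) * W)) := by
          rw [← mul_assoc x, mul_pow_eq_of_mul_eq_add_one hxd, add_mul (d ^ k * x), mul_assoc,
            smul_mul_assoc, mul_add, mul_smul_comm]
      _ = d ^ k * ((1 + d) * ((1 + d) ^ m * x ^ (m + 1)))
            + d ^ k * ((1 + d) * (m • ((1 + d) ^ (m - 1) * x ^ m)))
            + k • (d ^ (k - 1) * W + (d * d ^ (k - 1)) * W) := by
          rw [(hyd.pow_right k).left_comm, hxW, mul_add, mul_add, hy_mul (d ^ (k - 1) * W),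
            mul_assoc]
      _ = _ := by
          rw [← mul_assoc (1 + d), ← pow_succ', hyW, smul_add, ← smul_mul_assoc k (d * _),
            nsmul_mul_pow_pred, smul_mul_assoc, mul_smul_comm]
          abel
  have hscalar : a * k * a ^ (k - 1) = k * a ^ k := by
    cases k <;> simp [pow_succ]; ring
  simp only [charlierTerm, hW]
  rw [add_mul, mul_smul_comm, smul_mul_assoc, mul_smul_comm, mul_assoc, hxdW, hy_mul,
    smul_smul (a * k), hscalar, ← mul_assoc d, ← pow_succ']
  push_cast
  module

theorem charlierSum_succ (a : R) (x d : A) (n : ℕ) :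
    charlierSum a x d (n + 1) =
      ∑ km ∈ antidiagonal n, n.choose km.1 • charlierTerm a x d km.1 (km.2 + 1)
        + ∑ km ∈ antidiagonal n, n.choose km.1 • charlierTerm a x d (km.1 + 1) km.2 := by
  rw [charlierSum, sum_antidiagonal_choose_succ_nsmul (fun k m => charlierTerm a x d k m)]
  congr 1
  refine sum_congr rfl fun km hkm => ?_
  rw [Nat.choose_symm_of_eq_add (mem_antidiagonal.1 hkm).symm]

theorem sum_antidiagonal_mul_charlierTerm_pred (a : R) (x d : A) (n : ℕ) :
    ∑ km ∈ antidiagonal n, n.choose km.1 • (a * km.1) • charlierTerm a x d (km.1 - 1) km.2 =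
      (a * n) • charlierSum a x d (n - 1) := by
  cases n with
  | zero => simp
  | succ n =>
    rw [Finset.Nat.sum_antidiagonal_succ, charlierSum, Nat.add_sub_cancel, smul_sum]
    simp only [Nat.cast_zero, mul_zero, zero_smul, smul_zero, zero_add, Nat.add_sub_cancel]
    refine sum_congr rfl fun km _ => ?_
    rw [← Nat.cast_smul_eq_nsmul R, ← Nat.cast_smul_eq_nsmul R, smul_smul, smul_smul]
    congr 1
    have := congrArg (Nat.cast : ℕ → R) (Nat.add_one_mul_choose_eq n km.1)
    push_cast at this ⊢
    linear_combination (-a) * this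

theorem mul_charlierSum (hxd : x * d = d * x + 1) (a : R) (n : ℕ) :
    ((1 + d) * x + a • (1 + d)) * charlierSum a x d n =
      charlierSum a x d (n + 1) + ((n : R) + a) • charlierSum a x d n
        + (a * n) • charlierSum a x d (n - 1) := by
  have hdiag : ∑ km ∈ antidiagonal n,
      n.choose km.1 • (((km.1 + km.2 : ℕ) : R) + a) • charlierTerm a x d km.1 km.2 =
        ((n : R) + a) • charlierSum a x d n := by
    rw [charlierSum, smul_sum]
    refine sum_congr rfl fun km hkm => ?_
    rw [mem_antidiagonal.1 hkm, smul_comm]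
  rw [charlierSum_succ, ← hdiag, ← sum_antidiagonal_mul_charlierTerm_pred, charlierSum,
    mul_sum, ← sum_add_distrib, ← sum_add_distrib, ← sum_add_distrib]
  refine sum_congr rfl fun km _ => ?_
  rw [mul_smul_comm, mul_charlierTerm hxd, smul_add, smul_add, smul_add]

theorem charlierSum_zero (a : R) (x d : A) : charlierSum a x d 0 = 1 := by
  simp [charlierSum, charlierTerm]

theorem aeval_eq_charlierSum (hxd : x * d = d * x + 1) (a : R) (p : ℕ → Polynomial R)
    (hp0 : p 0 = 1) (hp1 : p 1 = Polynomial.X - Polynomial.C a)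
    (hrec : ∀ n : ℕ, 1 ≤ n →
      p (n + 1) = (Polynomial.X - Polynomial.C ((n : R) + a)) * p n
        - Polynomial.C (a * n) * p (n - 1)) (n : ℕ) :
    Polynomial.aeval ((1 + d) * x + a • (1 + d)) (p n) = charlierSum a x d n := by
  induction n using Nat.twoStepInduction with
  | zero => rw [hp0, map_one, charlierSum_zero]
  | one =>
    have h1 := mul_charlierSum hxd a 0
    rw [charlierSum_zero, mul_one] at h1
    rw [hp1, map_sub, Polynomial.aeval_X, Polynomial.aeval_C, Algebra.algebraMap_eq_smul_one, h1]
    simp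
  | more n ih₀ ih₁ =>
    rw [hrec (n + 1) n.succ_pos, map_sub, map_mul, map_mul, map_sub, Polynomial.aeval_X,
      Polynomial.aeval_C, Polynomial.aeval_C, Nat.add_sub_cancel, ih₀, ih₁, sub_mul,
      ← Algebra.smul_def, ← Algebra.smul_def, mul_charlierSum hxd, Nat.add_sub_cancel]
    abel

end WeylRelation

def UpperBanded (b : ℕ) (M : ℕ → ℕ → ℂ) : Prop := ∀ ⦃i j : ℕ⦄, i + b < j → M i j = 0

section UpperBanded

variable {b b₁ b₂ : ℕ} {A B : ℕ → ℕ → ℂ}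

theorem UpperBanded.matMul_eq_sum (hA : UpperBanded b A) (C : ℕ → ℕ → ℂ) {i N : ℕ}
    (hN : i + b < N) (k : ℕ) : matMul A C i k = ∑ j ∈ range N, A i j * C j k :=
  tsum_eq_sum fun j hj => by rw [hA (by simp at hj; omega), zero_mul]

theorem UpperBanded.summable (hA : UpperBanded b A) (C : ℕ → ℕ → ℂ) (i k : ℕ) :
    Summable fun j => A i j * C j k :=
  summable_of_ne_finset_zero (s := range (i + b + 1)) fun j hj => by
    rw [hA (by simp at hj; omega), zero_mul]

theorem upperBanded_matMul (hA : UpperBanded b₁ A) (hB : UpperBanded b₂ B) :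
    UpperBanded (b₁ + b₂) (matMul A B) := fun i k hik => by
  rw [hA.matMul_eq_sum B (lt_add_one _)]
  refine sum_eq_zero fun j hj => ?_
  rw [hB (by simp at hj; omega), mul_zero]

theorem UpperBanded.matMul_assoc (hA : UpperBanded b₁ A) (hB : UpperBanded b₂ B)
    (C : ℕ → ℕ → ℂ) : matMul (matMul A B) C = matMul A (matMul B C) := by
  ext i k
  calc matMul (matMul A B) C i k
      = ∑ j ∈ range (i + b₁ + b₂ + 1), (∑ l ∈ range (i + b₁ + 1), A i l * B l j) * C j k := by
        rw [(upperBanded_matMul hA hB).matMul_eq_sum C (N := i + b₁ + b₂ + 1) (by omega)]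
        simp only [hA.matMul_eq_sum B (lt_add_one _)]
    _ = ∑ l ∈ range (i + b₁ + 1), A i l * ∑ j ∈ range (i + b₁ + b₂ + 1), B l j * C j k := by
        simp only [sum_mul, mul_sum, mul_assoc]
        exact sum_comm
    _ = matMul A (matMul B C) i k := by
        rw [hA.matMul_eq_sum _ (lt_add_one _)]
        refine sum_congr rfl fun l hl => ?_
        rw [hB.matMul_eq_sum C (N := i + b₁ + b₂ + 1) (by simp at hl; omega)]

theorem UpperBanded.matMul_add (hA : UpperBanded b A) (B C : ℕ → ℕ → ℂ) :
    matMul A (B + C) = matMul A B + matMul A C := by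
  ext i k
  simp only [matMul, Pi.add_apply, mul_add]
  exact (hA.summable B i k).tsum_add (hA.summable C i k)

theorem UpperBanded.add_matMul (hA : UpperBanded b₁ A) (hB : UpperBanded b₂ B)
    (C : ℕ → ℕ → ℂ) : matMul (A + B) C = matMul A C + matMul B C := by
  ext i k
  simp only [matMul, Pi.add_apply, add_mul]
  exact (hA.summable C i k).tsum_add (hB.summable C i k)

end UpperBanded

theorem smul_matMul (c : ℂ) (A B : ℕ → ℕ → ℂ) : matMul (c • A) B = c • matMul A B := by
  ext i k
  simp only [matMul, Pi.smul_apply, smul_eq_mul, mul_assoc, tsum_mul_left]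

theorem matMul_smul (c : ℂ) (A B : ℕ → ℕ → ℂ) : matMul A (c • B) = c • matMul A B := by
  ext i k
  simp only [matMul, Pi.smul_apply, smul_eq_mul, mul_left_comm _ c, tsum_mul_left]

theorem Imat_matMul (A : ℕ → ℕ → ℂ) : matMul Imat A = A := by
  ext i k
  rw [matMul, tsum_eq_single i fun j hj => by simp [Imat, Ne.symm hj]]
  simp [Imat]

theorem matMul_Imat (A : ℕ → ℕ → ℂ) : matMul A Imat = A := by
  ext i k
  rw [matMul, tsum_eq_single k fun j hj => by simp [Imat, hj]]
  simp [Imat]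

theorem zero_matMul (A : ℕ → ℕ → ℂ) : matMul 0 A = 0 := by
  ext i k; simp [matMul]

theorem matMul_zero (A : ℕ → ℕ → ℂ) : matMul A 0 = 0 := by
  ext i k; simp [matMul]

theorem upperBanded_Imat : UpperBanded 0 Imat := fun i j h => if_neg (by omega)

theorem upperBanded_Xmat : UpperBanded 1 Xmat := fun i j h => if_neg (by omega)

theorem upperBanded_Dmat : UpperBanded 0 Dmat := fun i j h => if_neg (by omega)

theorem Xmat_matMul (M : ℕ → ℕ → ℂ) (i k : ℕ) : matMul Xmat M i k = M (i + 1) k := by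
  rw [matMul, tsum_eq_single (i + 1) fun j hj => by simp [Xmat, hj]]
  simp [Xmat]

theorem matMul_Xmat_zero (M : ℕ → ℕ → ℂ) (i : ℕ) : matMul M Xmat i 0 = 0 := by
  simp [matMul, Xmat]

theorem matMul_Xmat_succ (M : ℕ → ℕ → ℂ) (i k : ℕ) : matMul M Xmat i (k + 1) = M i k := by
  rw [matMul, tsum_eq_single k fun j hj => by simp [Xmat, Ne.symm hj]]
  simp [Xmat]

def upperBandedMatrices : Submodule ℂ (ℕ → ℕ → ℂ) where
  carrier := {M | ∃ b, UpperBanded b M}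
  add_mem' := by
    rintro A B ⟨b₁, hA⟩ ⟨b₂, hB⟩
    exact ⟨max b₁ b₂, fun i j h => by
      rw [Pi.add_apply, Pi.add_apply, hA (by omega), hB (by omega), add_zero]⟩
  zero_mem' := ⟨0, fun _ _ _ => rfl⟩
  smul_mem' := by
    rintro c A ⟨b, hA⟩
    exact ⟨b, fun i j h => by rw [Pi.smul_apply, Pi.smul_apply, hA h, smul_zero]⟩

abbrev BandedMatrix : Type := upperBandedMatrices

namespace BandedMatrix

instance : One BandedMatrix := ⟨⟨Imat, 0, upperBanded_Imat⟩⟩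

noncomputable instance : Mul BandedMatrix :=
  ⟨fun A B => ⟨matMul A.1 B.1, by
    obtain ⟨b₁, hA⟩ := A.2
    obtain ⟨b₂, hB⟩ := B.2
    exact ⟨b₁ + b₂, upperBanded_matMul hA hB⟩⟩⟩

theorem coe_mul (A B : BandedMatrix) : ((A * B : BandedMatrix) : ℕ → ℕ → ℂ) = matMul A B := rfl

noncomputable instance : Ring BandedMatrix :=
  { (inferInstance : AddCommGroup BandedMatrix) with
    mul_assoc := fun A B C => by
      obtain ⟨b₁, hA⟩ := A.2
      obtain ⟨b₂, hB⟩ := B.2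
      exact Subtype.ext (hA.matMul_assoc hB C)
    one_mul := fun A => Subtype.ext (Imat_matMul A)
    mul_one := fun A => Subtype.ext (matMul_Imat A)
    zero_mul := fun A => Subtype.ext (zero_matMul A)
    mul_zero := fun A => Subtype.ext (matMul_zero A)
    left_distrib := fun A B C => by
      obtain ⟨b, hA⟩ := A.2
      exact Subtype.ext (hA.matMul_add B C)
    right_distrib := fun A B C => by
      obtain ⟨b₁, hA⟩ := A.2
      obtain ⟨b₂, hB⟩ := B.2
      exact Subtype.ext (hA.add_matMul hB C) }

noncomputable instance : Algebra ℂ BandedMatrix :=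
  Algebra.ofModule (fun c A B => Subtype.ext (smul_matMul c A B))
    (fun c A B => Subtype.ext (matMul_smul c A B))

theorem coe_pow (A : BandedMatrix) (m : ℕ) :
    ((A ^ m : BandedMatrix) : ℕ → ℕ → ℂ) = matPow A m := by
  induction m with
  | zero => rfl
  | succ m ih => rw [pow_succ, coe_mul, ih, matPow]

theorem coe_aeval (w : Polynomial ℂ) (A : BandedMatrix) :
    ((Polynomial.aeval A w : BandedMatrix) : ℕ → ℕ → ℂ) = matPolyEval w A := by
  ext i k
  rw [Polynomial.aeval_eq_sum_range, Submodule.coe_sum, Finset.sum_apply, Finset.sum_apply,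
    matPolyEval]
  simp only [Submodule.coe_smul, coe_pow, Pi.smul_apply, smul_eq_mul]

def X : BandedMatrix := ⟨Xmat, 1, upperBanded_Xmat⟩

def D : BandedMatrix := ⟨Dmat, 0, upperBanded_Dmat⟩

theorem X_mul_D : X * D = D * X + 1 := by
  refine Subtype.ext (funext fun i => funext fun k => ?_)
  change matMul Xmat Dmat i k = matMul Dmat Xmat i k + Imat i k
  rw [Xmat_matMul]
  cases k with
  | zero => by_cases h : i = 0 <;> simp [matMul_Xmat_zero, Dmat, Imat, h]
  | succ k =>
    rw [matMul_Xmat_succ]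
    by_cases h : i = k + 1 <;> simp [Dmat, Imat, h]

end BandedMatrix

theorem stmt16_general (a : ℂ) (p : ℕ → Polynomial ℂ)
    (hp0 : p 0 = 1) (hp1 : p 1 = Polynomial.X - Polynomial.C a)
    (hrec : ∀ n : ℕ, 1 ≤ n →
      p (n + 1) = (Polynomial.X - Polynomial.C ((n : ℂ) + a)) * p n
        - Polynomial.C (a * n) * p (n - 1)) :
    let H : ℕ → ℕ → ℂ :=
      fun i k => Xmat i k + matMul Xmat Dmat i k + (a - 1) * Imat i k + a * Dmat i k
    let IplusD : ℕ → ℕ → ℂ := fun i k => Imat i k + Dmat i k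
    ∀ n i j : ℕ,
      matPolyEval (p n) H i j =
        ∑ k ∈ Finset.range (n + 1),
          (n.choose k : ℂ) * a ^ k *
            matMul (matPow Dmat k)
              (matMul (matPow IplusD (n - k)) (matPow Xmat (n - k))) i j := by
  open BandedMatrix in
  intro H IplusD n i j
  have hH : H = ((1 + D) * X + a • (1 + D) : BandedMatrix) := by
    change ((X + X * D + (a - 1) • 1 + a • D : BandedMatrix) : ℕ → ℕ → ℂ) = _
    rw [X_mul_D, add_mul, one_mul]
    congr 1
    module
  have hI : IplusD = ((1 + D : BandedMatrix) : ℕ → ℕ → ℂ) := rfl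
  rw [hH, ← coe_aeval, aeval_eq_charlierSum X_mul_D a p hp0 hp1 hrec, charlierSum,
    Finset.Nat.sum_antidiagonal_eq_sum_range_succ_mk, Submodule.coe_sum, Finset.sum_apply,
    Finset.sum_apply]
  refine sum_congr rfl fun k _ => ?_
  rw [charlierTerm, Submodule.coe_smul_of_tower, Pi.smul_apply, Pi.smul_apply,
    Submodule.coe_smul, Pi.smul_apply, Pi.smul_apply, coe_mul, coe_mul, coe_pow, coe_pow, coe_pow,
    nsmul_eq_mul, smul_eq_mul, mul_assoc, hI]
  rfl

theorem stmt16 (a : ℂ) (ha : a ≠ 0) (p : ℕ → Polynomial ℂ)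
    (hp0 : p 0 = 1) (hp1 : p 1 = Polynomial.X - Polynomial.C a)
    (hrec : ∀ n : ℕ, 1 ≤ n →
      p (n + 1) = (Polynomial.X - Polynomial.C ((n : ℂ) + a)) * p n
        - Polynomial.C (a * n) * p (n - 1)) :
    let H : ℕ → ℕ → ℂ :=
      fun i k => Xmat i k + matMul Xmat Dmat i k + (a - 1) * Imat i k + a * Dmat i k
    let IplusD : ℕ → ℕ → ℂ := fun i k => Imat i k + Dmat i k
    ∀ n i j : ℕ,
      matPolyEval (p n) H i j =
        ∑ k ∈ Finset.range (n + 1),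
          (n.choose k : ℂ) * a ^ k *
            matMul (matPow Dmat k)
              (matMul (matPow IplusD (n - k)) (matPow Xmat (n - k))) i j :=
  stmt16_general a p hp0 hp1 hrec
end
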